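/- Let G be a real symmetric 3×3 matrix, R, R̄ ∈ SO(3), and set Q = R·R̄ᵀ. Then the attitude error vector e_R = (RᵀGR̄ − R̄ᵀGR)^∨ satisfies ‖e_R‖² = ½·‖G·Qᵀ − Q·G‖², where the norm on the right is the Frobenius norm. -/

import Mathlib

open Matrix Polynomial

noncomputable section

/-- The hat map sending `x ∈ ℝ³` to the skew-symmetric matrix `x̂` with `x̂ y = x × y`. -/
def hat (x : Fin 3 → ℝ) : Matrix (Fin 3) (Fin 3) ℝ :=
  !![0, -x 2, x 1; x 2, 0, -x 0; -x 1, x 0, 0]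

/-- The vee map, inverse of the hat map on skew-symmetric `3 × 3` matrices. -/
def vee (A : Matrix (Fin 3) (Fin 3) ℝ) : Fin 3 → ℝ :=
  ![A 2 1, A 0 2, A 1 0]

/-- `SO3 R` iff `R` is a rotation matrix: `RᵀR = I₃` and `det R = 1`. -/
def SO3 (R : Matrix (Fin 3) (Fin 3) ℝ) : Prop :=
  Rᵀ * R = 1 ∧ R.det = 1

/-- Frobenius inner product `⟨A,B⟩ = tr(AᵀB)`. -/
def finner (A B : Matrix (Fin 3) (Fin 3) ℝ) : ℝ := (Aᵀ * B).trace

/-- Frobenius norm `‖A‖ = √⟨A,A⟩`. -/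
def fnorm (A : Matrix (Fin 3) (Fin 3) ℝ) : ℝ := Real.sqrt (finner A A)

/-- Euclidean norm of a vector. -/
def vnorm {k : ℕ} (x : Fin k → ℝ) : ℝ := Real.sqrt (x ⬝ᵥ x)

/-- Third standard basis vector `e₃ = (0,0,1)` of `ℝ³`. -/
def e3 : Fin 3 → ℝ := ![0, 0, 1]

/-!
Both sides are quadratic in the skew-symmetric matrix `A = RᵀG R̄ − R̄ᵀG R`. Since `R` is
orthogonal, `G Qᵀ − Q G = R A Rᵀ`, and conjugation by `R` preserves the Frobenius norm, so the
right-hand side is `½ ‖A‖²`. For a skew-symmetric `3 × 3` matrix the three entries of `A^∨`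
each occur twice in `A`, up to sign, whence `‖A‖² = 2 ‖A^∨‖²`.
-/

lemma vnorm_sq {k : ℕ} (x : Fin k → ℝ) : vnorm x ^ 2 = x ⬝ᵥ x :=
  Real.sq_sqrt (by simpa using dotProduct_self_star_nonneg x)

lemma finner_self_nonneg (A : Matrix (Fin 3) (Fin 3) ℝ) : 0 ≤ finner A A := by
  simpa [finner] using (posSemidef_conjTranspose_mul_self A).trace_nonneg

lemma fnorm_sq (A : Matrix (Fin 3) (Fin 3) ℝ) : fnorm A ^ 2 = finner A A :=
  Real.sq_sqrt (finner_self_nonneg A)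

lemma finner_conj_of_orthogonal {R : Matrix (Fin 3) (Fin 3) ℝ} (hR : Rᵀ * R = 1)
    (A B : Matrix (Fin 3) (Fin 3) ℝ) : finner (R * A * Rᵀ) (R * B * Rᵀ) = finner A B := by
  have hconj : (R * A * Rᵀ)ᵀ * (R * B * Rᵀ) = R * (Aᵀ * (Rᵀ * R) * B) * Rᵀ := by
    simp only [transpose_mul, transpose_transpose]
    noncomm_ring
  rw [finner, finner, hconj, hR, mul_one, trace_mul_cycle, ← Matrix.mul_assoc, hR, one_mul]

lemma finner_self_eq_two_mul_vee_dotProduct {A : Matrix (Fin 3) (Fin 3) ℝ} (hA : Aᵀ = -A) :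
    finner A A = 2 * (vee A ⬝ᵥ vee A) := by
  have hskew : ∀ i j, A j i = -A i j := fun i j => by
    simpa using congrFun (congrFun hA i) j
  have hdiag : ∀ i, A i i = 0 := fun i => by linarith [hskew i i]
  simp only [finner, trace, diag, mul_apply, transpose_apply, vee, dotProduct,
    Fin.sum_univ_three, hdiag, hskew 2 0, hskew 0 1, hskew 1 2]
  simp only [Matrix.cons_val]
  ring

lemma transpose_attitudeError_eq_neg {G : Matrix (Fin 3) (Fin 3) ℝ} (hG : Gᵀ = G)
    (R Rbar : Matrix (Fin 3) (Fin 3) ℝ) :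
    (Rᵀ * G * Rbar - Rbarᵀ * G * R)ᵀ = -(Rᵀ * G * Rbar - Rbarᵀ * G * R) := by
  simp only [transpose_sub, transpose_mul, transpose_transpose, hG]
  noncomm_ring

lemma conj_attitudeError {R : Matrix (Fin 3) (Fin 3) ℝ} (hR : R * Rᵀ = 1)
    (G Rbar : Matrix (Fin 3) (Fin 3) ℝ) :
    R * (Rᵀ * G * Rbar - Rbarᵀ * G * R) * Rᵀ = G * (R * Rbarᵀ)ᵀ - R * Rbarᵀ * G := by
  have hexpand : R * (Rᵀ * G * Rbar - Rbarᵀ * G * R) * Rᵀ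
      = R * Rᵀ * (G * Rbar * Rᵀ) - R * Rbarᵀ * G * (R * Rᵀ) := by
    noncomm_ring
  rw [hexpand, hR, one_mul, mul_one, transpose_mul, transpose_transpose, Matrix.mul_assoc]

theorem stmt_10_general (G : Matrix (Fin 3) (Fin 3) ℝ) (hG : Gᵀ = G)
    (R Rbar : Matrix (Fin 3) (Fin 3) ℝ) (hR : SO3 R)
    (Q : Matrix (Fin 3) (Fin 3) ℝ) (hQ : Q = R * Rbarᵀ)
    (eR : Fin 3 → ℝ) (heR : eR = vee (Rᵀ * G * Rbar - Rbarᵀ * G * R)) :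
    vnorm eR ^ 2 = (1 / 2) * fnorm (G * Qᵀ - Q * G) ^ 2 := by
  subst hQ heR
  have hRRt : R * Rᵀ = 1 := mul_eq_one_comm.mp hR.1
  rw [vnorm_sq, fnorm_sq, ← conj_attitudeError hRRt, finner_conj_of_orthogonal hR.1,
    finner_self_eq_two_mul_vee_dotProduct (transpose_attitudeError_eq_neg hG R Rbar)]
  ring

/-- with `Q = R Rbarᵀ`, the attitude error vector
`e_R = (RᵀG Rbar − RbarᵀG R)^∨` satisfies `‖e_R‖² = ½ ‖G Qᵀ − Q G‖²`. -/
theorem stmt_10 (G : Matrix (Fin 3) (Fin 3) ℝ) (hG : Gᵀ = G)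
    (R Rbar : Matrix (Fin 3) (Fin 3) ℝ) (hR : SO3 R) (hRbar : SO3 Rbar)
    (Q : Matrix (Fin 3) (Fin 3) ℝ) (hQ : Q = R * Rbarᵀ)
    (eR : Fin 3 → ℝ) (heR : eR = vee (Rᵀ * G * Rbar - Rbarᵀ * G * R)) :
    vnorm eR ^ 2 = (1 / 2) * fnorm (G * Qᵀ - Q * G) ^ 2 :=
  stmt_10_general G hG R Rbar hR Q hQ eR heR
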